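/- (Multisection of generalized Fibonacci numbers.) For all natural numbers m ≥ 1 and j with j ≤ m, the following identity of formal power series over ℝ holds: (1 − L(m)·X + (−b)^m·X²) · ( Σ_{n≥0} F(m·n + j)·Xⁿ ) = F(j) + (−b)^j·F(m−j)·X. -/

import Mathlib

noncomputable def genFib (a b : ℝ) : ℕ → ℝ
  | 0 => 0
  | 1 => 1
  | n + 2 => a * genFib a b (n + 1) + b * genFib a b n

noncomputable def genLuc (a b : ℝ) : ℕ → ℝ
  | 0 => 2
  | 1 => a
  | n + 2 => a * genLuc a b (n + 1) + b * genLuc a b n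

/-!
The sequence `u n = F(m n + j)` satisfies `u (n+2) = L(m) u (n+1) - (-b)^m u n`, because
`F(k + 2m) = L(m) F(k + m) - (-b)^m F(k)`; so multiplying its generating series by
`1 - L(m) X + (-b)^m X²` leaves only the first two coefficients, `F(j)` and
`F(m + j) - L(m) F(j) = (-b)^j F(m - j)`. Both index identities come from
`L(m) F(n) = F(m + n) + (F(m+1) F(n) - F(m) F(n+1))`, whose bracket d'Ocagne's identity evaluates
as `(-b)^m F(n - m)` when `m ≤ n` and as `-(-b)^n F(m - n)` when `n ≤ m`.
-/

namespace PowerSeries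

variable {R : Type*} [CommRing R]

theorem one_sub_X_add_X_sq_mul_mk (c d : R) (u : ℕ → R)
    (hu : ∀ n, u (n + 2) = c * u (n + 1) - d * u n) :
    (1 - C c * X + C d * X ^ 2) * mk u = C (u 0) + C (u 1 - c * u 0) * X := by
  ext (_ | _ | n) <;> simp [sub_mul, add_mul, mul_assoc, coeff_X_pow_mul', coeff_C, hu]

end PowerSeries

section GeneralizedFibonacci

variable (a b : ℝ)

@[simp]
theorem genFib_add_two (n : ℕ) :
    genFib a b (n + 2) = a * genFib a b (n + 1) + b * genFib a b n := rfl

@[simp]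
theorem genLuc_add_two (n : ℕ) :
    genLuc a b (n + 2) = a * genLuc a b (n + 1) + b * genLuc a b n := rfl

theorem genFib_dOcagne (m k : ℕ) :
    genFib a b (m + 1) * genFib a b (m + k) - genFib a b m * genFib a b (m + k + 1) =
      (-b) ^ m * genFib a b k := by
  induction m with
  | zero => simp [genFib]
  | succ m ih =>
    rw [show m + 1 + k + 1 = m + k + 2 by omega, show m + 1 + k = m + k + 1 by omega,
      genFib_add_two, genFib_add_two, pow_succ]
    linear_combination (-b) * ih

theorem genLuc_mul_genFib (m n : ℕ) :
    genLuc a b m * genFib a b n =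
      genFib a b (m + n) +
        (genFib a b (m + 1) * genFib a b n - genFib a b m * genFib a b (n + 1)) := by
  induction m using Nat.twoStepInduction with
  | zero => simp [genLuc, genFib, two_mul]
  | one => simp [genLuc, genFib, add_comm 1 n]
  | more m ih₀ ih₁ =>
    rw [show m + 2 + n = m + n + 2 by omega, show m + 1 + n = m + n + 1 by omega] at *
    simp only [genLuc_add_two, genFib_add_two]
    linear_combination a * ih₁ + b * ih₀ + a * genFib a b n * genFib_add_two a b m

theorem genFib_add_two_mul (m n : ℕ) :
    genFib a b (n + 2 * m) = genLuc a b m * genFib a b (n + m) - (-b) ^ m * genFib a b n := by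
  have hdOcagne := genFib_dOcagne a b m n
  rw [genLuc_mul_genFib, ← hdOcagne, show n + 2 * m = m + (n + m) by omega, add_comm n m]
  ring

theorem genFib_add_of_le {m j : ℕ} (hj : j ≤ m) :
    genFib a b (m + j) = genLuc a b m * genFib a b j + (-b) ^ j * genFib a b (m - j) := by
  have hdOcagne := genFib_dOcagne a b j (m - j)
  rw [Nat.add_sub_cancel' hj] at hdOcagne
  rw [genLuc_mul_genFib, ← hdOcagne]
  ring

end GeneralizedFibonacci

open PowerSeries in
theorem genFib_multisection_general (a b : ℝ) (m j : ℕ) (hj : j ≤ m) :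
    (1 - C (genLuc a b m) * X + C ((-b) ^ m) * X ^ 2) *
        PowerSeries.mk (fun n => genFib a b (m * n + j)) =
      C (genFib a b j) + C ((-b) ^ j * genFib a b (m - j)) * X := by
  rw [one_sub_X_add_X_sq_mul_mk]
  · simp [genFib_add_of_le a b hj]
  · intro n
    rw [show m * (n + 2) + j = m * n + j + 2 * m by ring,
      show m * (n + 1) + j = m * n + j + m by ring]
    exact genFib_add_two_mul a b m _

open PowerSeries in
theorem genFib_multisection (a b : ℝ) (m j : ℕ) (hm : 1 ≤ m) (hj : j ≤ m) :
    (1 - C (genLuc a b m) * X + C ((-b) ^ m) * X ^ 2) *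
        PowerSeries.mk (fun n => genFib a b (m * n + j)) =
      C (genFib a b j) + C ((-b) ^ j * genFib a b (m - j)) * X :=
  genFib_multisection_general a b m j hj
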